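/- arXiv:1604.02279 — 3 statements merged into one kernel-verified Lean document; each statement's English description precedes it below -/
import Mathlib

section
/- For real ω, the scattering matrix G(ω) = -(-Lω² + iRω + K)(-Lω² - iRω + K)⁻¹ is unitary, where L, K are real positive semidefinite symmetric n×n matrices with L invertible, R > 0 is a real scalar, and -Lω² - iRω + K is invertible. -/
/-!
With `A = K - ω²L` Hermitian and `c = iRω` purely imaginary, the two factors are `A - c` and
`A + c = (A - c)ᴴ`. Both are polynomials in `A`, so `A - c` is normal, and for an invertible
normal `M` the Cayley-type quotient `Mᴴ M⁻¹` is unitary.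
-/

open Matrix Complex

theorem Units.star_mul_inv_mem_unitary {R : Type*} [Monoid R] [StarMul R] (u : Rˣ)
    (h : Commute (u : R) (star (u : R))) : star (u : R) * ↑u⁻¹ ∈ unitary R := by
  rw [← Units.coe_star, Units.mul_inv_mem_unitary, star_star]
  exact Units.ext h.eq

namespace Matrix

variable {n α : Type*} [DecidableEq n] [CommRing α]

theorem conjTranspose_mul_inv_mem_unitary [Fintype n] [StarRing α] {M : Matrix n n α}
    (hM : IsUnit M) (h : Commute M Mᴴ) : Mᴴ * M⁻¹ ∈ unitary (Matrix n n α) := by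
  obtain ⟨u, rfl⟩ := hM
  rw [← coe_units_inv]
  exact u.star_mul_inv_mem_unitary h

theorem IsHermitian.conjTranspose_sub_smul_one [StarRing α] {A : Matrix n n α}
    (hA : A.IsHermitian) {c : α} (hc : star c = -c) : (A - c • 1)ᴴ = A + c • 1 := by
  rw [conjTranspose_sub, conjTranspose_smul, conjTranspose_one, hA.eq, hc, neg_smul,
    sub_neg_eq_add]

theorem commute_sub_smul_one_add_smul_one [Fintype n] (A : Matrix n n α) (c : α) :
    Commute (A - c • 1) (A + c • 1) := by
  have hc : Commute A (c • 1) := (Commute.one_right A).smul_right c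
  exact ((Commute.refl A).add_right hc).sub_left (hc.symm.add_right (Commute.refl _))

end Matrix

theorem scattering_matrix_unitary_general (n : ℕ)
    (L K : Matrix (Fin n) (Fin n) ℝ)
    (hL : L.PosSemidef) (hK : K.PosSemidef)
    (R ω : ℝ)
    (Mm Mp G : Matrix (Fin n) (Fin n) ℂ)
    (hMm : Mm = (-(ω ^ 2 : ℂ)) • (L.map (Complex.ofReal))
        - ((Complex.I * R * ω) • (1 : Matrix (Fin n) (Fin n) ℂ))
        + K.map (Complex.ofReal))
    (hMp : Mp = (-(ω ^ 2 : ℂ)) • (L.map (Complex.ofReal))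
        + ((Complex.I * R * ω) • (1 : Matrix (Fin n) (Fin n) ℂ))
        + K.map (Complex.ofReal))
    (hMminv : IsUnit Mm)
    (hG : G = -(Mp * Mm⁻¹)) :
    Gᴴ * G = 1 ∧ G * Gᴴ = 1 := by
  set A := (-(ω ^ 2 : ℂ)) • L.map ofReal + K.map ofReal
  set c := I * R * ω
  have hA : A.IsHermitian := by
    refine ((hL.isHermitian.map ofReal fun _ => (conj_ofReal _).symm).smul ?_).add
      (hK.isHermitian.map ofReal fun _ => (conj_ofReal _).symm)
    simp [IsSelfAdjoint, ← ofReal_pow]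
  have hMm' : Mm = A - c • 1 := by rw [hMm, sub_add_eq_add_sub]
  have hMp' : Mp = Mmᴴ := by
    rw [hMp, add_right_comm, hMm', hA.conjTranspose_sub_smul_one (by simp [c])]
  have hnormal : Commute Mm Mmᴴ := by
    rw [← hMp', hMm', hMp, add_right_comm]
    exact commute_sub_smul_one_add_smul_one A c
  have hunitary := conjTranspose_mul_inv_mem_unitary hMminv hnormal
  rw [hG, hMp', conjTranspose_neg, neg_mul_neg, neg_mul_neg]
  exact Unitary.mem_iff.mp hunitary

/-- The scattering matrix `G(ω) = -(-Lω² + iRω + K)(-Lω² - iRω + K)⁻¹` is unitary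
for real `ω`, with `L, K` real PSD symmetric, `L` invertible, `R > 0`. -/
theorem scattering_matrix_unitary (n : ℕ)
    (L K : Matrix (Fin n) (Fin n) ℝ)
    (hL : L.PosSemidef) (hK : K.PosSemidef) (hLinv : IsUnit L)
    (R ω : ℝ) (hR : 0 < R)
    (Mm Mp G : Matrix (Fin n) (Fin n) ℂ)
    (hMm : Mm = (-(ω ^ 2 : ℂ)) • (L.map (Complex.ofReal))
        - ((Complex.I * R * ω) • (1 : Matrix (Fin n) (Fin n) ℂ))
        + K.map (Complex.ofReal))
    (hMp : Mp = (-(ω ^ 2 : ℂ)) • (L.map (Complex.ofReal))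
        + ((Complex.I * R * ω) • (1 : Matrix (Fin n) (Fin n) ℂ))
        + K.map (Complex.ofReal))
    (hMminv : IsUnit Mm)
    (hG : G = -(Mp * Mm⁻¹)) :
    Gᴴ * G = 1 ∧ G * Gᴴ = 1 :=
  scattering_matrix_unitary_general n L K hL hK R ω Mm Mp G hMm hMp hMminv hG
end

section
/- Given the boundary condition L(q̈_in + q̈_out) + K(q_in + q_out) = (1/(κc))(q̇_in - q̇_out) for smooth ℝⁿ-valued functions decaying with their derivatives at infinity, integration from t = 0 to ∞ yields: (1/2)(q̇_in(0)+q̇_out(0))ᵀL(q̇_in(0)+q̇_out(0)) + (1/2)(q_in(0)+q_out(0))ᵀK(q_in(0)+q_out(0)) = (1/(κc))∫₀^∞ (|q̇_out(τ)|² - |q̇_in(τ)|²) dτ. -/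
open Matrix MeasureTheory Filter

lemma hasDerivAt_dot_mulVec {n : ℕ} (M : Matrix (Fin n) (Fin n) ℝ)
    {u v : ℝ → Fin n → ℝ} {u' v' : Fin n → ℝ} {t : ℝ}
    (hu : HasDerivAt u u' t) (hv : HasDerivAt v v' t) :
    HasDerivAt (fun s => u s ⬝ᵥ M.mulVec (v s))
      (u' ⬝ᵥ M.mulVec (v t) + u t ⬝ᵥ M.mulVec v') t := by
  have hu' := hasDerivAt_pi.mp hu
  have hv' := hasDerivAt_pi.mp hv
  have h : ∀ i ∈ Finset.univ, HasDerivAt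
      (fun s => ∑ j : Fin n, u s i * (M i j * v s j))
      (∑ j : Fin n, (u' i * (M i j * v t j) + u t i * (M i j * v' j))) t := by
    intro i _
    exact HasDerivAt.fun_sum fun j _ => (hu' i).mul ((hv' j).const_mul _)
  have := HasDerivAt.fun_sum h
  convert this using 1
  · rfl
  · rfl
  · funext s
    simp [dotProduct, mulVec, Finset.mul_sum]
  · simp [dotProduct, mulVec, Finset.mul_sum, Finset.sum_add_distrib]

lemma dot_mulVec_symm {n : ℕ} {M : Matrix (Fin n) (Fin n) ℝ} (hM : M.IsSymm)
    (u v : Fin n → ℝ) : u ⬝ᵥ M.mulVec v = v ⬝ᵥ M.mulVec u := by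
  rw [dotProduct_mulVec, dotProduct_comm, ← Matrix.mulVec_transpose, hM]

/-- Integrating the boundary condition from `t = 0` to `∞` yields the energy
balance between the circuit energy at time `0` and the net field energy flux. -/
theorem boundary_condition_energy_balance (n : ℕ)
    (L K : Matrix (Fin n) (Fin n) ℝ)
    (hL : L.PosSemidef) (hK : K.PosSemidef)
    (κ c : ℝ) (hκ : 0 < κ) (hc : 0 < c)
    (qin qout : ℝ → (Fin n → ℝ))
    (hin : ContDiff ℝ (⊤ : ℕ∞) qin) (hout : ContDiff ℝ (⊤ : ℕ∞) qout)
    -- decay of the functions and their derivatives at +∞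
    (hin0 : Tendsto qin atTop (nhds 0))
    (hout0 : Tendsto qout atTop (nhds 0))
    (hin0' : Tendsto (deriv qin) atTop (nhds 0))
    (hout0' : Tendsto (deriv qout) atTop (nhds 0))
    -- integrability so the right-hand side converges
    (hint : IntegrableOn
      (fun τ => (deriv qout τ) ⬝ᵥ (deriv qout τ) - (deriv qin τ) ⬝ᵥ (deriv qin τ))
      (Set.Ioi (0 : ℝ)))
    -- the boundary condition
    (hbc : ∀ t : ℝ, 0 ≤ t →
      L.mulVec (deriv (deriv qin) t + deriv (deriv qout) t)
        + K.mulVec (qin t + qout t)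
      = (1 / (κ * c)) • (deriv qin t - deriv qout t)) :
    (1 / 2) * ((deriv qin 0 + deriv qout 0) ⬝ᵥ
        L.mulVec (deriv qin 0 + deriv qout 0))
      + (1 / 2) * ((qin 0 + qout 0) ⬝ᵥ K.mulVec (qin 0 + qout 0))
    = (1 / (κ * c)) * ∫ τ in Set.Ioi (0 : ℝ),
        ((deriv qout τ) ⬝ᵥ (deriv qout τ) - (deriv qin τ) ⬝ᵥ (deriv qin τ)) := by
  -- basic differentiability facts
  have hinS : ContDiff ℝ ((⊤ : ℕ∞) : WithTop ℕ∞) qin := hin.of_le (by simp)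
  have houtS : ContDiff ℝ ((⊤ : ℕ∞) : WithTop ℕ∞) qout := hout.of_le (by simp)
  have hin1 := (contDiff_infty_iff_deriv.mp hinS).1
  have hin2 := (contDiff_infty_iff_deriv.mp hinS).2
  have hout1 := (contDiff_infty_iff_deriv.mp houtS).1
  have hout2 := (contDiff_infty_iff_deriv.mp houtS).2
  have hin1' := (contDiff_infty_iff_deriv.mp hin2).1
  have hout1' := (contDiff_infty_iff_deriv.mp hout2).1
  -- p t = qin t + qout t, v t = deriv qin t + deriv qout t
  set p : ℝ → Fin n → ℝ := fun t => qin t + qout t with hp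
  set v : ℝ → Fin n → ℝ := fun t => deriv qin t + deriv qout t with hv
  have hpderiv : ∀ t, HasDerivAt p (v t) t := fun t =>
    ((hin1 t).hasDerivAt).add ((hout1 t).hasDerivAt)
  have hvderiv : ∀ t, HasDerivAt v (deriv (deriv qin) t + deriv (deriv qout) t) t :=
    fun t => ((hin1' t).hasDerivAt).add ((hout1' t).hasDerivAt)
  -- the energy function
  set E : ℝ → ℝ := fun t =>
    (1 / 2) * (v t ⬝ᵥ L.mulVec (v t)) + (1 / 2) * (p t ⬝ᵥ K.mulVec (p t)) with hE
  -- its derivative on [0, ∞)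
  have hEderiv : ∀ t ∈ Set.Ici (0 : ℝ), HasDerivAt E
      (-((1 / (κ * c)) * ((deriv qout t) ⬝ᵥ (deriv qout t)
        - (deriv qin t) ⬝ᵥ (deriv qin t)))) t := by
    intro t ht
    have h1 := hasDerivAt_dot_mulVec L (hvderiv t) (hvderiv t)
    have h2 := hasDerivAt_dot_mulVec K (hpderiv t) (hpderiv t)
    have hD := ((h1.const_mul (1 / 2 : ℝ)).add (h2.const_mul (1 / 2 : ℝ)))
    convert hD using 1
    · rfl
    · rfl
    · rfl
    have hLs : ∀ a b : Fin n → ℝ, a ⬝ᵥ L.mulVec b = b ⬝ᵥ L.mulVec a :=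
      dot_mulVec_symm hL.1
    have hKs : ∀ a b : Fin n → ℝ, a ⬝ᵥ K.mulVec b = b ⬝ᵥ K.mulVec a :=
      dot_mulVec_symm hK.1
    have key : v t ⬝ᵥ (L.mulVec (deriv (deriv qin) t + deriv (deriv qout) t)
        + K.mulVec (p t)) = (1 / (κ * c)) * ((deriv qin t) ⬝ᵥ (deriv qin t)
          - (deriv qout t) ⬝ᵥ (deriv qout t)) := by
      rw [hbc t ht]
      have : v t ⬝ᵥ ((1 / (κ * c)) • (deriv qin t - deriv qout t))
          = (1 / (κ * c)) * (v t ⬝ᵥ (deriv qin t - deriv qout t)) := by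
        simp [dotProduct_smul, smul_eq_mul]
      rw [this]
      have hcross : deriv qin t ⬝ᵥ deriv qout t = deriv qout t ⬝ᵥ deriv qin t :=
        dotProduct_comm _ _
      simp only [hv, dotProduct_sub, add_dotProduct, sub_dotProduct,
        dotProduct_add]
      ring_nf
      rw [hcross]
      ring
    calc -((1 / (κ * c)) * ((deriv qout t) ⬝ᵥ (deriv qout t)
          - (deriv qin t) ⬝ᵥ (deriv qin t)))
        = (1 / (κ * c)) * ((deriv qin t) ⬝ᵥ (deriv qin t)
          - (deriv qout t) ⬝ᵥ (deriv qout t)) := by ring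
      _ = v t ⬝ᵥ (L.mulVec (deriv (deriv qin) t + deriv (deriv qout) t)
          + K.mulVec (p t)) := key.symm
      _ = 1 / 2 * ((deriv (deriv qin) t + deriv (deriv qout) t) ⬝ᵥ L.mulVec (v t)
            + v t ⬝ᵥ L.mulVec (deriv (deriv qin) t + deriv (deriv qout) t))
          + 1 / 2 * (v t ⬝ᵥ K.mulVec (p t) + p t ⬝ᵥ K.mulVec (v t)) := by
          rw [hLs (deriv (deriv qin) t + deriv (deriv qout) t) (v t),
            hKs (p t) (v t), dotProduct_add]
          ring
  -- E tends to 0 at infinity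
  have hE0 : Tendsto E atTop (nhds 0) := by
    have hvtend : Tendsto v atTop (nhds 0) := by
      have := hin0'.add hout0'
      simpa using this
    have hptend : Tendsto p atTop (nhds 0) := by
      have := hin0.add hout0
      simpa using this
    have hF : ∀ (M : Matrix (Fin n) (Fin n) ℝ) (w : ℝ → Fin n → ℝ),
        Tendsto w atTop (nhds 0) →
        Tendsto (fun t => w t ⬝ᵥ M.mulVec (w t)) atTop (nhds 0) := by
      intro M w hw
      have hcont : Continuous (fun x : Fin n → ℝ => x ⬝ᵥ M.mulVec x) := by
        have heq : (fun x : Fin n → ℝ => x ⬝ᵥ M.mulVec x)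
            = fun x => ∑ i, x i * ∑ j, M i j * x j := by
          funext x; simp [dotProduct, mulVec]
        rw [heq]
        exact continuous_finset_sum _ fun i _ =>
          (continuous_apply i).mul (continuous_finset_sum _ fun j _ =>
            (continuous_const.mul (continuous_apply j)))
      have := (hcont.tendsto 0).comp hw
      simpa [Function.comp_def] using this
    have := ((hF L v hvtend).const_mul (1 / 2 : ℝ)).add
      ((hF K p hptend).const_mul (1 / 2 : ℝ))
    simpa only [mul_zero, add_zero] using this
  -- integrability of the derivative
  have hint' : IntegrableOn (fun t =>
      -((1 / (κ * c)) * ((deriv qout t) ⬝ᵥ (deriv qout t)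
        - (deriv qin t) ⬝ᵥ (deriv qin t)))) (Set.Ioi (0 : ℝ)) :=
    (hint.const_mul _).neg
  have key := integral_Ioi_of_hasDerivAt_of_tendsto' hEderiv hint' hE0
  rw [integral_neg, integral_const_mul] at key
  have : E 0 = (1 / (κ * c)) * ∫ τ in Set.Ioi (0 : ℝ),
      ((deriv qout τ) ⬝ᵥ (deriv qout τ) - (deriv qin τ) ⬝ᵥ (deriv qin τ)) := by
    linarith [key]
  simpa [hE, hp, hv] using this
end

section
/- The double-time limit defining the quantum Wiener covariance: for bounded continuous J with J(Ω) defined, lim_{λ→0} (1/λ²) ∫₀ᵗ dτ ∫₀^{t'} dτ' ∫_ℝ dω (J(ω)/2π) e^{-i(ω-Ω)(τ-τ')/λ²} = J(Ω)·min{t, t'}, under the hypothesis that J is continuous, integrable, with integrable Fourier transform. -/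
open Filter MeasureTheory Real Complex intervalIntegral
open scoped Topology FourierTransform RealInnerProductSpace

/-!
The ω-integral is a rescaled, modulated Fourier transform: with
`k(s) = ∫ J(ω)/2π · e^{-i(ω-Ω)s} dω` one has `k(s) = e^{iΩs}/2π · Ĵ(s/2π)`, so `k` is integrable
and Fourier inversion gives `∫ k = J(Ω)`. Substituting `u = (τ - τ')/λ²` turns
`λ⁻² ∫₀^{t'} k((τ - τ')/λ²) dτ'` into `∫ k` over `[(τ - t')/λ², τ/λ²]`. As `λ → 0` this window
exhausts `ℝ` when `τ < t'` and escapes to `+∞` when `τ > t'`, so the inner integral tends to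
`J(Ω) · 1_{τ ≤ t'}` for a.e. `τ ∈ (0, t]`, dominated by `‖k‖₁`; integrating over `τ` gives
`J(Ω) · min t t'`.
-/

section VanHove

variable {E : Type*} [NormedAddCommGroup E] [NormedSpace ℝ E]

theorem inv_smul_integral_comp_sub_left_div (h : ℝ → E) (τ t' c : ℝ) :
    c⁻¹ • ∫ τ' in (0 : ℝ)..t', h ((τ - τ') / c) = ∫ u in (τ - t') / c..τ / c, h u := by
  rw [integral_comp_sub_left (fun x => h (x / c)), sub_zero, inv_smul_integral_comp_div]

variable {h : ℝ → E}

theorem continuous_intervalIntegral_comp (hh : ∀ a b, IntervalIntegrable h volume a b)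
    {a b : ℝ → ℝ} (ha : Continuous a) (hb : Continuous b) :
    Continuous fun x => ∫ u in a x..b x, h u := by
  have hP := continuous_primitive hh 0
  refine ((hP.comp hb).sub (hP.comp ha)).congr fun x => ?_
  exact integral_interval_sub_left (hh 0 _) (hh 0 _)

theorem tendsto_div_nhdsGT_zero_atTop {a : ℝ} (ha : 0 < a) :
    Tendsto (fun c => a / c) (𝓝[>] 0) atTop := by
  simpa only [div_eq_mul_inv] using tendsto_inv_nhdsGT_zero.const_mul_atTop ha

theorem tendsto_div_nhdsGT_zero_atBot {a : ℝ} (ha : a < 0) :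
    Tendsto (fun c => a / c) (𝓝[>] 0) atBot := by
  simpa only [div_eq_mul_inv] using tendsto_inv_nhdsGT_zero.const_mul_atTop_of_neg ha

theorem tendsto_intervalIntegral_div_of_neg_of_pos (hh : Integrable h) {a b : ℝ} (ha : a < 0)
    (hb : 0 < b) : Tendsto (fun c => ∫ u in a / c..b / c, h u) (𝓝[>] 0) (𝓝 (∫ u, h u)) :=
  intervalIntegral_tendsto_integral hh (tendsto_div_nhdsGT_zero_atBot ha)
    (tendsto_div_nhdsGT_zero_atTop hb)

theorem tendsto_intervalIntegral_div_of_pos [CompleteSpace E] (hh : Integrable h) {a b : ℝ}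
    (ha : 0 < a) (hb : 0 < b) :
    Tendsto (fun c => ∫ u in a / c..b / c, h u) (𝓝[>] 0) (𝓝 0) := by
  have hIoi {a : ℝ} (ha : 0 < a) := intervalIntegral_tendsto_integral_Ioi 0 hh.integrableOn
    (tendsto_div_nhdsGT_zero_atTop ha)
  simpa only [integral_interval_sub_left hh.intervalIntegrable hh.intervalIntegrable, sub_self]
    using (hIoi hb).sub (hIoi ha)

theorem integral_indicator_Iic_const [CompleteSpace E] {t t' : ℝ} (ht : 0 ≤ t) (ht' : 0 ≤ t')
    (x : E) : ∫ τ in (0 : ℝ)..t, (Set.Iic t').indicator (fun _ => x) τ = min t t' • x := by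
  rw [integral_of_le ht, setIntegral_indicator measurableSet_Iic, Set.Ioc_inter_Iic,
    setIntegral_const, volume_real_Ioc_of_le (le_min ht ht'), sub_zero]

theorem tendsto_inv_smul_integral_integral_comp_sub_div [CompleteSpace E] (hh : Integrable h)
    {t t' : ℝ} (ht : 0 ≤ t) (ht' : 0 ≤ t') :
    Tendsto (fun c : ℝ => c⁻¹ • ∫ τ in (0 : ℝ)..t, ∫ τ' in (0 : ℝ)..t', h ((τ - τ') / c))
      (𝓝[>] 0) (𝓝 (min t t' • ∫ u, h u)) := by
  have hinner (c : ℝ) : c⁻¹ • ∫ τ in (0 : ℝ)..t, ∫ τ' in (0 : ℝ)..t', h ((τ - τ') / c) =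
      ∫ τ in (0 : ℝ)..t, ∫ u in (τ - t') / c..τ / c, h u := by
    rw [← intervalIntegral.integral_smul]
    exact integral_congr fun τ _ => inv_smul_integral_comp_sub_left_div h τ t' c
  simp_rw [hinner]
  rw [← integral_indicator_Iic_const ht ht']
  refine tendsto_integral_filter_of_dominated_convergence (fun _ => ∫ u, ‖h u‖) ?_ ?_
    intervalIntegrable_const ?_
  · exact .of_forall fun c => (continuous_intervalIntegral_comp (fun _ _ => hh.intervalIntegrable)
      (by fun_prop) (by fun_prop)).aestronglyMeasurable
  · exact .of_forall fun c => ae_of_all _ fun τ _ => norm_integral_le_integral_norm_uIoc.trans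
      (setIntegral_le_integral hh.norm (.of_forall fun _ => norm_nonneg _))
  · filter_upwards [(Set.countable_singleton t').ae_notMem volume] with τ hτt' hτ
    rw [Set.uIoc_of_le ht] at hτ
    rcases lt_or_gt_of_ne hτt' with hlt | hgt
    · rw [Set.indicator_of_mem (Set.mem_Iic.2 hlt.le)]
      exact tendsto_intervalIntegral_div_of_neg_of_pos hh (sub_neg.2 hlt) hτ.1
    · rw [Set.indicator_of_notMem (Set.notMem_Iic.2 hgt)]
      exact tendsto_intervalIntegral_div_of_pos hh (sub_pos.2 hgt) hτ.1

end VanHove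

/-- The paper's `k_λ(σ)` is `bathCorrelation J Ω (σ / λ²)`. -/
noncomputable def bathCorrelation (f : ℝ → ℂ) (Ω s : ℝ) : ℂ :=
  ∫ ω, f ω / (2 * π) * cexp (-I * (ω - Ω) * s)

theorem bathCorrelation_eq (f : ℝ → ℂ) (Ω s : ℝ) :
    bathCorrelation f Ω s = (2 * π)⁻¹ • (𝐞 ⟪s / (2 * π), Ω⟫ • 𝓕 f (s / (2 * π))) := by
  rw [bathCorrelation, fourier_real_eq, Circle.smul_def, ← MeasureTheory.integral_smul,
    ← MeasureTheory.integral_smul]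
  refine integral_congr_ae (.of_forall fun ω => ?_)
  have hexp : cexp (-I * (ω - Ω) * s) =
      cexp (↑(2 * π * ⟪s / (2 * π), Ω⟫) * I) * cexp (↑(2 * π * -(ω * (s / (2 * π)))) * I) := by
    rw [← Complex.exp_add]
    congr 1
    simp only [Real.inner_apply]
    push_cast
    field_simp
    ring
  simp only [Circle.smul_def, fourierChar_apply, smul_eq_mul, Complex.real_smul, hexp]
  push_cast
  ring

theorem integrable_fourierInv_integrand {V F : Type*} [NormedAddCommGroup V]
    [InnerProductSpace ℝ V] [MeasurableSpace V] [BorelSpace V] [FiniteDimensional ℝ V]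
    [NormedAddCommGroup F] [NormedSpace ℂ F] {f : V → F} (hf : Integrable f) (w : V) :
    Integrable fun v => 𝐞 ⟪v, w⟫ • f v := by
  simpa only [inner_neg_right, neg_neg] using (Real.fourierIntegral_convergent_iff (-w)).2 hf

theorem integrable_bathCorrelation {f : ℝ → ℂ} (hf : Integrable (𝓕 f)) (Ω : ℝ) :
    Integrable (bathCorrelation f Ω) :=
  (((integrable_fourierInv_integrand hf Ω).comp_div two_pi_pos.ne').smul (2 * π)⁻¹).congr
    (.of_forall fun s => (bathCorrelation_eq f Ω s).symm)

theorem integral_bathCorrelation {f : ℝ → ℂ} (hf : Integrable f) (hFf : Integrable (𝓕 f))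
    {Ω : ℝ} (hc : ContinuousAt f Ω) : ∫ s, bathCorrelation f Ω s = f Ω := by
  simp_rw [bathCorrelation_eq]
  rw [MeasureTheory.integral_smul, Measure.integral_comp_div (fun ξ => 𝐞 ⟪ξ, Ω⟫ • 𝓕 f ξ),
    ← fourierInv_eq, hf.fourierInv_fourier_eq hFf hc, abs_of_pos two_pi_pos, smul_smul,
    inv_mul_cancel₀ two_pi_pos.ne', one_smul]

theorem tendsto_sq_nhdsGT_zero : Tendsto (fun x : ℝ => x ^ 2) (𝓝[>] 0) (𝓝[>] 0) :=
  tendsto_nhdsWithin_of_tendsto_nhds_of_eventually_within _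
    ((continuous_pow 2).tendsto' 0 0 (zero_pow two_ne_zero) |>.mono_left nhdsWithin_le_nhds)
    (eventually_mem_nhdsWithin.mono fun _ hx => Set.mem_Ioi.2 (pow_pos hx 2))

/-- The double-time van Hove limit defining the quantum Wiener covariance:
`(1/λ²)∫₀ᵗ∫₀^{t'} ∫ (J(ω)/2π) e^{-i(ω-Ω)(τ-τ')/λ²} dω dτ' dτ → J(Ω)·min(t,t')`. -/
theorem van_hove_wiener_covariance_limit
    (J : ℝ → ℝ) (hJc : Continuous J) (hJi : Integrable J)
    (hJf : Integrable (FourierTransform.fourier (fun x => (J x : ℂ))))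
    (Ω : ℝ) (t t' : ℝ) (ht : 0 ≤ t) (ht' : 0 ≤ t') :
    Tendsto
      (fun lam : ℝ => (1 / lam ^ 2 : ℂ) *
        ∫ τ in (0 : ℝ)..t, ∫ τ' in (0 : ℝ)..t', ∫ ω : ℝ,
          ((J ω : ℂ) / (2 * Real.pi))
            * Complex.exp (-Complex.I * (ω - Ω) * (τ - τ') / lam ^ 2))
      (nhdsWithin 0 (Set.Ioi 0))
      (nhds ((J Ω : ℂ) * (min t t' : ℝ))) := by
  have hlim := (tendsto_inv_smul_integral_integral_comp_sub_div
    (integrable_bathCorrelation hJf Ω) ht ht').comp tendsto_sq_nhdsGT_zero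
  rw [integral_bathCorrelation (f := fun x => (J x : ℂ)) hJi.ofReal hJf
    (continuous_ofReal.comp hJc).continuousAt] at hlim
  rw [show (J Ω : ℂ) * (min t t' : ℝ) = min t t' • (J Ω : ℂ) by rw [Complex.real_smul, mul_comm]]
  refine hlim.congr fun lam => ?_
  simp only [Function.comp_apply, bathCorrelation, Complex.real_smul, mul_div_assoc, one_div,
    ofReal_inv, ofReal_pow, ofReal_div, ofReal_sub]
end
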